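/- arXiv:2001.01201 — 3 statements merged into one kernel-verified Lean document; each statement's English description precedes it below -/
import Mathlib

section
/- Let T₀ > 0, β ∈ [0,1], a > 0 and n ∈ ℕ. Let X = (X₁,…,Xₙ) be a random vector whose coordinates are i.i.d. uniform on {−a, a}. Then for every f ∈ ℝ, the expected energy spectral density of the pulse-amplitude-modulated signal satisfies E[ |𝓕(∑_{i=1}^n Xᵢ·gᵢ)(f)|² ] = a²·n·|𝓕φ(f)|², where gᵢ(t) = φ(t − (i − 1/2)·T₀). -/
/-!
By linearity of the Fourier transform and the shift rule, the spectrum of the PAM signal at `f`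
is `∑ i, Xᵢ • eᵢ • 𝓕φ(f)` with unimodular phases `eᵢ`. Expanding the squared norm, the cross
terms `E[XᵢXⱼ]` vanish by independence and zero mean, and each diagonal term contributes
`E[Xᵢ²] = a²`.
-/

open MeasureTheory
open scoped FourierTransform ENNReal

/-- The root raised cosine (RRC) pulse with duration `T0` and roll-off factor `β`. -/
noncomputable def rrc (T0 β : ℝ) : ℝ → ℝ := fun t =>
  if |t| ≤ ((1 - β) / (1 + β)) * (T0 / 2) then Real.sqrt ((1 + β) / T0)
  else if |t| ≤ T0 / 2 then
    Real.sqrt ((1 + Real.cos ((Real.pi * (1 + β) / (T0 * β)) *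
      (|t| - ((1 - β) / (1 + β)) * (T0 / 2)))) * (1 + β) / (2 * T0))
  else 0

/-- The uniform distribution on the two-point set `{-a, a}`. -/
noncomputable def twoPoint (a : ℝ) : Measure ℝ :=
  (1 / 2 : ℝ≥0∞) • Measure.dirac (-a) + (1 / 2 : ℝ≥0∞) • Measure.dirac a

open ProbabilityTheory RealInnerProductSpace

section RRC

variable (T0 β : ℝ)

lemma measurable_rrc : Measurable (rrc T0 β) := by
  unfold rrc
  refine Measurable.ite (measurableSet_le (by fun_prop) measurable_const) (by fun_prop) ?_
  exact Measurable.ite (measurableSet_le (by fun_prop) measurable_const) (by fun_prop) (by fun_prop)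

lemma abs_rrc_le (t : ℝ) : |rrc T0 β t| ≤ √|(1 + β) / T0| := by
  unfold rrc
  split_ifs
  · rw [abs_of_nonneg (Real.sqrt_nonneg _)]
    exact Real.sqrt_le_sqrt (le_abs_self _)
  · rw [abs_of_nonneg (Real.sqrt_nonneg _)]
    refine Real.sqrt_le_sqrt ?_
    set θ := Real.pi * (1 + β) / (T0 * β) * (|t| - (1 - β) / (1 + β) * (T0 / 2))
    have hθ : |(1 + Real.cos θ) / 2| ≤ 1 := by
      rw [abs_le]; constructor <;> linarith [Real.cos_le_one θ, Real.neg_one_le_cos θ]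
    calc (1 + Real.cos θ) * (1 + β) / (2 * T0)
        = (1 + Real.cos θ) / 2 * ((1 + β) / T0) := by ring
      _ ≤ |(1 + Real.cos θ) / 2| * |(1 + β) / T0| := by rw [← abs_mul]; exact le_abs_self _
      _ ≤ |(1 + β) / T0| := mul_le_of_le_one_left (abs_nonneg _) hθ
  · simp

lemma abs_le_of_rrc_ne_zero {t : ℝ} (ht : rrc T0 β t ≠ 0) :
    |t| ≤ max ((1 - β) / (1 + β) * (T0 / 2)) (T0 / 2) := by
  unfold rrc at ht
  split_ifs at ht with h₁ h₂
  · exact le_max_of_le_left h₁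
  · exact le_max_of_le_right h₂
  · exact absurd rfl ht

lemma integrable_rrc : Integrable (rrc T0 β) := by
  set R := max ((1 - β) / (1 + β) * (T0 / 2)) (T0 / 2)
  have hsupp : Function.support (rrc T0 β) ⊆ Set.Icc (-R) R := fun t ht =>
    abs_le.1 (abs_le_of_rrc_ne_zero T0 β ht)
  rw [← integrableOn_iff_integrable_of_support_subset hsupp]
  refine Measure.integrableOn_of_bounded (M := √|(1 + β) / T0|) measure_Icc_lt_top.ne
    (measurable_rrc T0 β).aestronglyMeasurable (ae_of_all _ fun t => ?_)
  simpa only [Real.norm_eq_abs] using abs_rrc_le T0 β t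

end RRC

section Fourier

variable {E : Type*} [NormedAddCommGroup E] [NormedSpace ℂ E]

lemma fourier_comp_sub_right (g : ℝ → E) (τ w : ℝ) :
    𝓕 (fun t => g (t - τ)) w = 𝐞 (-(τ * w)) • 𝓕 g w := by
  simp_rw [Real.fourier_real_eq, Circle.smul_def]
  rw [← integral_smul, ← integral_add_right_eq_self _ τ]
  congr 1 with t
  rw [add_sub_cancel_right, smul_smul, ← Circle.coe_mul, ← AddChar.map_add_eq_mul]
  ring_nf

lemma fourier_sum_smul_comp_sub {ι : Type*} [Fintype ι] {g : ℝ → E} (hg : Integrable g)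
    (c τ : ι → ℝ) (w : ℝ) :
    𝓕 (fun t => ∑ i, c i • g (t - τ i)) w = ∑ i, c i • 𝐞 (-(τ i * w)) • 𝓕 g w := by
  have hint : ∀ i, Integrable fun t => c i • g (t - τ i) := fun i =>
    (hg.comp_sub_right (τ i)).smul (c i)
  rw [Real.fourier_real_eq]
  simp_rw [Finset.smul_sum]
  rw [integral_finsetSum _ fun i _ => by
    simpa [mul_comm] using (Real.fourierIntegral_convergent_iff w).2 (hint i)]
  refine Finset.sum_congr rfl fun i _ => ?_
  simp_rw [smul_comm _ (c i)]
  rw [integral_smul (c i), ← Real.fourier_real_eq, fourier_comp_sub_right]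

end Fourier

lemma norm_sum_smul_sq {ι E : Type*} [Fintype ι] [NormedAddCommGroup E] [InnerProductSpace ℝ E]
    (x : ι → ℝ) (c : ι → E) :
    ‖∑ i, x i • c i‖ ^ 2 = ∑ i, ∑ j, x i * x j * ⟪c i, c j⟫ := by
  rw [← real_inner_self_eq_norm_sq, sum_inner]
  refine Finset.sum_congr rfl fun i _ => ?_
  rw [inner_sum]
  refine Finset.sum_congr rfl fun j _ => ?_
  rw [real_inner_smul_left, real_inner_smul_right]
  ring

section Pi

variable {ι : Type*} [Fintype ι] (μ : Measure ℝ) [IsProbabilityMeasure μ]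

lemma integrable_eval_mul_eval_pi (hμ : MemLp id 2 μ) (i j : ι) :
    Integrable (fun x : ι → ℝ => x i * x j) (Measure.pi fun _ => μ) := by
  obtain rfl | hij := eq_or_ne i j
  · simpa [sq] using integrable_comp_eval (i := i) (μ := fun _ => μ) hμ.integrable_sq
  · exact (iIndepFun_pi (X := fun _ => id) fun _ => aemeasurable_id).indepFun hij |>.integrable_mul
      (integrable_eval (hμ.integrable one_le_two)) (integrable_eval (hμ.integrable one_le_two))

lemma integral_eval_mul_eval_pi [DecidableEq ι] (i j : ι) :
    ∫ x : ι → ℝ, x i * x j ∂(Measure.pi fun _ => μ)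
      = if i = j then ∫ y, y ^ 2 ∂μ else (∫ y, y ∂μ) ^ 2 := by
  split_ifs with hij
  · subst hij
    simp_rw [← sq]
    exact integral_comp_eval (f := fun y : ℝ => y ^ 2) (μ := fun _ => μ) (by fun_prop)
  · rw [((iIndepFun_pi (X := fun _ => id) fun _ => aemeasurable_id).indepFun
      hij).integral_fun_mul_eq_mul_integral
      (measurable_pi_apply i).aestronglyMeasurable (measurable_pi_apply j).aestronglyMeasurable]
    simp only [integral_eval, sq]

theorem integral_norm_sum_smul_sq_pi {E : Type*} [NormedAddCommGroup E] [InnerProductSpace ℝ E]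
    (hμ : MemLp id 2 μ) (hmean : ∫ y, y ∂μ = 0) (c : ι → E) :
    ∫ x : ι → ℝ, ‖∑ i, x i • c i‖ ^ 2 ∂(Measure.pi fun _ => μ)
      = (∫ y, y ^ 2 ∂μ) * ∑ i, ‖c i‖ ^ 2 := by
  classical
  have hint : ∀ i j, Integrable (fun x : ι → ℝ => x i * x j * ⟪c i, c j⟫)
      (Measure.pi fun _ => μ) := fun i j => (integrable_eval_mul_eval_pi μ hμ i j).mul_const _
  simp_rw [norm_sum_smul_sq]
  rw [integral_finsetSum _ fun i _ => integrable_finsetSum _ fun j _ => hint i j,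
    Finset.mul_sum]
  refine Finset.sum_congr rfl fun i _ => ?_
  rw [integral_finsetSum _ fun j _ => hint i j]
  simp_rw [integral_mul_const, integral_eval_mul_eval_pi, hmean]
  simp

end Pi

section TwoPoint

variable (a : ℝ)

instance : IsProbabilityMeasure (twoPoint a) := by
  constructor
  simp [twoPoint, ENNReal.inv_two_add_inv_two]

lemma integrable_twoPoint {E : Type*} [NormedAddCommGroup E] (g : ℝ → E) :
    Integrable g (twoPoint a) :=
  ((integrable_dirac (f := g) enorm_lt_top).smul_measure (by simp)).add_measure
    ((integrable_dirac (f := g) enorm_lt_top).smul_measure (by simp))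

lemma integral_twoPoint (g : ℝ → ℝ) :
    ∫ y, g y ∂(twoPoint a) = (g (-a) + g a) / 2 := by
  rw [twoPoint, integral_add_measure, integral_smul_measure, integral_smul_measure,
    integral_dirac, integral_dirac]
  · simp only [one_div, ENNReal.toReal_inv, ENNReal.toReal_ofNat, smul_eq_mul]
    ring
  · exact (integrable_dirac (f := g) enorm_lt_top).smul_measure (by simp)
  · exact (integrable_dirac (f := g) enorm_lt_top).smul_measure (by simp)

lemma memLp_id_two_twoPoint : MemLp id 2 (twoPoint a) :=
  (memLp_two_iff_integrable_sq aestronglyMeasurable_id).2 (integrable_twoPoint a _)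

lemma integral_id_twoPoint : ∫ y, y ∂(twoPoint a) = 0 := by
  simp [integral_twoPoint]

lemma integral_sq_twoPoint : ∫ y, y ^ 2 ∂(twoPoint a) = a ^ 2 := by
  simp [integral_twoPoint]

end TwoPoint

theorem expected_esd_pam_general (T0 β a : ℝ) (n : ℕ) (f : ℝ) :
    (∫ x : Fin n → ℝ,
        ‖𝓕 (fun t : ℝ => ∑ i : Fin n,
            (x i : ℂ) * (rrc T0 β (t - (((i : ℕ) : ℝ) + 1 - 1 / 2) * T0) : ℂ)) f‖ ^ 2
      ∂(Measure.pi fun _ : Fin n => twoPoint a))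
    = a ^ 2 * n * ‖𝓕 (fun t : ℝ => (rrc T0 β t : ℂ)) f‖ ^ 2 := by
  have hspectrum : ∀ τ x : Fin n → ℝ,
      𝓕 (fun t : ℝ => ∑ i, (x i : ℂ) * (rrc T0 β (t - τ i) : ℂ)) f
        = ∑ i, x i • 𝐞 (-(τ i * f)) • 𝓕 (fun t : ℝ => (rrc T0 β t : ℂ)) f := fun τ x => by
    simp only [← Complex.real_smul]
    exact fourier_sum_smul_comp_sub (g := fun t => (rrc T0 β t : ℂ))
      (integrable_rrc T0 β).ofReal x τ f
  simp only [hspectrum]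
  rw [integral_norm_sum_smul_sq_pi _ (memLp_id_two_twoPoint a) (integral_id_twoPoint a),
    integral_sq_twoPoint]
  simp only [Circle.norm_smul, Finset.sum_const, Finset.card_univ, Fintype.card_fin, nsmul_eq_mul]
  ring

/-- The expected energy spectral density of the PAM signal with i.i.d. BPSK symbols equals
`a² n |𝓕φ(f)|²`. -/
theorem expected_esd_pam (T0 β a : ℝ) (hT0 : 0 < T0) (hβ : β ∈ Set.Icc (0 : ℝ) 1)
    (ha : 0 < a) (n : ℕ) (f : ℝ) :
    (∫ x : Fin n → ℝ,
        ‖𝓕 (fun t : ℝ => ∑ i : Fin n,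
            (x i : ℂ) * (rrc T0 β (t - (((i : ℕ) : ℝ) + 1 - 1 / 2) * T0) : ℂ)) f‖ ^ 2
      ∂(Measure.pi fun _ : Fin n => twoPoint a))
    = a ^ 2 * n * ‖𝓕 (fun t : ℝ => (rrc T0 β t : ℂ)) f‖ ^ 2 :=
  expected_esd_pam_general T0 β a n f
end

section
/- For every T₀ > 0 and every β ∈ [0,1], the root raised cosine pulse has unit energy: ∫_ℝ φ(t)² dt = 1. -/
open MeasureTheory

/-!
The square of the RRC pulse is `t ↦ p (|t|)` for a raised cosine profile `p`: the constant `c`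
on `[0, a]`, then the half period `c (1 + cos (k (s - a))) / 2` falling from `c` to `0` on
`[a, b]`, where `k (b - a) = π`. The cosine integrates to zero over that half period, so
`∫₀^∞ p = c a + c (b - a) / 2 = c (a + b) / 2`, and for the RRC pulse `c (a + b) = 1`.
-/

open Real Set intervalIntegral

noncomputable def raisedCosineProfile (c a b k : ℝ) (s : ℝ) : ℝ :=
  if s ≤ a then c else if s ≤ b then c * (1 + cos (k * (s - a))) / 2 else 0

theorem integral_cos_mul_sub_eq_zero {a b k : ℝ} (h : k * (b - a) = π) :
    ∫ s in a..b, cos (k * (s - a)) = 0 := by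
  have hk : k ≠ 0 := by rintro rfl; simp [pi_ne_zero.symm] at h
  rw [integral_comp_sub_right (fun s => cos (k * s)), integral_comp_mul_left cos hk,
    integral_cos, h]
  simp

theorem integral_raisedCosineProfile_Ioi {c a b k : ℝ} (ha : 0 ≤ a) (hab : a ≤ b)
    (hk : k * (b - a) = π ∨ a = b) :
    ∫ s in Ioi 0, raisedCosineProfile c a b k s = c * (a + b) / 2 := by
  set p := raisedCosineProfile c a b k
  have hflat : EqOn p (fun _ => c) (uIcc 0 a) := fun s hs => by
    rw [uIcc_of_le ha] at hs
    simp [p, raisedCosineProfile, hs.2]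
  have hbump : EqOn p (fun s => c * (1 + cos (k * (s - a))) / 2) (uIcc a b) := fun s hs => by
    rw [uIcc_of_le hab] at hs
    rcases hs.1.eq_or_lt with rfl | has
    · simp [p, raisedCosineProfile]
      ring
    · simp [p, raisedCosineProfile, has.not_ge, hs.2]
  have hcos : ∫ s in a..b, cos (k * (s - a)) = 0 := by
    rcases hk with hk | rfl
    · exact integral_cos_mul_sub_eq_zero hk
    · exact integral_same
  have hsupport : ∫ s in Ioi 0, p s = ∫ s in (0)..b, p s := by
    rw [integral_of_le (ha.trans hab), setIntegral_eq_of_subset_of_forall_sdiff_eq_zero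
      measurableSet_Ioi Ioc_subset_Ioi_self]
    rintro s ⟨hs0, hsb⟩
    have hbs : b < s := by simp_all
    simp [p, raisedCosineProfile, (hab.trans_lt hbs).not_ge, hbs.not_ge]
  have hbump_integral : ∫ s in a..b, c * (1 + cos (k * (s - a))) / 2 = c * (b - a) / 2 := by
    rw [intervalIntegral.integral_div, intervalIntegral.integral_const_mul,
      intervalIntegral.integral_add intervalIntegrable_const
        ((by fun_prop : Continuous fun s => cos (k * (s - a))).intervalIntegrable a b),
      hcos, intervalIntegral.integral_const, smul_eq_mul]
    ring
  rw [hsupport, ← integral_add_adjacent_intervals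
    ((continuousOn_const.congr hflat).intervalIntegrable)
    (ContinuousOn.intervalIntegrable (ContinuousOn.congr (by fun_prop) hbump)),
    integral_congr hflat, integral_congr hbump, hbump_integral, intervalIntegral.integral_const,
    smul_eq_mul]
  ring

theorem rrc_sq {T0 β : ℝ} (h : 0 ≤ (1 + β) / T0) (t : ℝ) :
    rrc T0 β t ^ 2 = raisedCosineProfile ((1 + β) / T0) ((1 - β) / (1 + β) * (T0 / 2)) (T0 / 2)
      (π * (1 + β) / (T0 * β)) |t| := by
  unfold rrc raisedCosineProfile
  split_ifs
  · exact sq_sqrt h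
  · set x := π * (1 + β) / (T0 * β) * (|t| - (1 - β) / (1 + β) * (T0 / 2))
    have hx : (1 + cos x) * (1 + β) / (2 * T0) = (1 + β) / T0 * (1 + cos x) / 2 := by ring
    rw [hx, sq_sqrt (div_nonneg (mul_nonneg h (by linarith [neg_one_le_cos x])) two_pos.le)]
  · simp

/-- The root raised cosine pulse has unit energy. -/
theorem rrc_unit_energy (T0 β : ℝ) (hT0 : 0 < T0) (hβ : β ∈ Set.Icc (0 : ℝ) 1) :
    ∫ t : ℝ, (rrc T0 β t) ^ 2 = 1 := by
  obtain ⟨hβ0, hβ1⟩ := hβ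
  have h1β : 0 < 1 + β := by linarith
  set c := (1 + β) / T0 with hc
  set a := (1 - β) / (1 + β) * (T0 / 2) with ha_def
  set k := π * (1 + β) / (T0 * β) with hk_def
  have ha : 0 ≤ a := mul_nonneg (div_nonneg (by linarith) h1β.le) (by positivity)
  have hab : a ≤ T0 / 2 := mul_le_of_le_one_left (by positivity) ((div_le_one h1β).2 (by linarith))
  -- for `β = 0` the roll-off interval is empty and `k` is the junk value `π / 0 = 0`
  have hk : k * (T0 / 2 - a) = π ∨ a = T0 / 2 := by
    rcases hβ0.eq_or_lt with rfl | hβpos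
    · right; norm_num [ha_def]
    · left; rw [hk_def, ha_def]; field_simp; ring
  calc ∫ t, rrc T0 β t ^ 2
      = ∫ t, raisedCosineProfile c a (T0 / 2) k |t| := by
        congr 1 with t
        exact rrc_sq (by positivity) t
    _ = 1 := by
      rw [integral_comp_abs, integral_raisedCosineProfile_Ioi ha hab hk, hc, ha_def]
      field_simp
      ring
end

section
/- Let a > 0 and N > 0. For every x ∈ ℝ with |x| ≥ a/2 + N/(2a), the binary Gaussian mixture density dominates the centered Gaussian density: ½·exp(−(x−a)²/N) + ½·exp(−(x+a)²/N) ≥ exp(−x²/N). Equivalently, every root of the function f(x) = ½·exp(−(x−a)²/N) + ½·exp(−(x+a)²/N) − exp(−x²/N) has absolute value at most a/2 + N/(2a). -/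
/-! For `|x| ≥ a/2 + N/(2a)` the exponent of the nearer mixture component exceeds `-x²/N` by
`(2a|x| - a²)/N ≥ 1 > log 2`, so that component alone, with its weight `1/2`, already dominates
`exp (-x²/N)`. -/

open Real

lemma two_mul_exp_le_exp_of_add_one_le {s t : ℝ} (h : s + 1 ≤ t) : 2 * exp s ≤ exp t :=
  calc 2 * exp s ≤ exp 1 * exp s := by
        gcongr
        linarith [add_one_le_exp (1 : ℝ)]
    _ = exp (s + 1) := by rw [exp_add, mul_comm]
    _ ≤ exp t := exp_le_exp.mpr h

lemma neg_sq_div_add_one_le_neg_sub_sq_div {a N y : ℝ} (ha : 0 < a) (hN : 0 < N)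
    (hy : a / 2 + N / (2 * a) ≤ y) : -y ^ 2 / N + 1 ≤ -(y - a) ^ 2 / N := by
  have hgap : N ≤ 2 * a * y - a ^ 2 := by
    have := mul_le_mul_of_nonneg_left hy (by positivity : (0 : ℝ) ≤ 2 * a)
    rw [mul_add, mul_div_cancel₀ _ (by positivity : (2 * a) ≠ 0)] at this
    linarith
  have hsplit : -(y - a) ^ 2 / N = -y ^ 2 / N + (2 * a * y - a ^ 2) / N := by ring
  rw [hsplit, add_le_add_iff_left, le_div_iff₀ hN, one_mul]
  exact hgap

lemma two_mul_exp_neg_sq_div_le {a N y : ℝ} (ha : 0 < a) (hN : 0 < N)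
    (hy : a / 2 + N / (2 * a) ≤ y) : 2 * exp (-y ^ 2 / N) ≤ exp (-(y - a) ^ 2 / N) :=
  two_mul_exp_le_exp_of_add_one_le (neg_sq_div_add_one_le_neg_sub_sq_div ha hN hy)

/-- For `|x| ≥ a/2 + N/(2a)`, the binary Gaussian mixture density dominates the centered
Gaussian density; equivalently, every root of their difference has absolute value at most
`a/2 + N/(2a)`. -/
theorem mixture_dominates_gaussian (a N : ℝ) (ha : 0 < a) (hN : 0 < N) (x : ℝ)
    (hx : a / 2 + N / (2 * a) ≤ |x|) :
    Real.exp (-x ^ 2 / N) ≤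
      (1 / 2) * Real.exp (-(x - a) ^ 2 / N) + (1 / 2) * Real.exp (-(x + a) ^ 2 / N) := by
  rcases le_total 0 x with hx0 | hx0
  · rw [abs_of_nonneg hx0] at hx
    have hnear := two_mul_exp_neg_sq_div_le ha hN hx
    linarith [exp_pos (-(x + a) ^ 2 / N)]
  · rw [abs_of_nonpos hx0] at hx
    have hnear := two_mul_exp_neg_sq_div_le ha hN hx
    rw [neg_sq, show (-x - a) ^ 2 = (x + a) ^ 2 by ring] at hnear
    linarith [exp_pos (-(x - a) ^ 2 / N)]
end
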